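/- Let Σ = Σ_{l=1}^r θ_l θ_l^T + I_p with orthogonal nonzero vectors θ_l satisfying ||θ_l||^2 ∈ (K^{-1}, K), and let Γ = Σ_{l=1}^ξ η_l η_l^T + I_p with orthogonal nonzero vectors η_l satisfying ||η_l||^2 ∈ ((2K)^{-1}, 2K), where K ≥ 1. If the operator norm ||Γ - Σ|| < (2K)^{-1}, then ξ = r. -/
import Mathlib

open Matrix

noncomputable section

def opNorm {p : ℕ} (A : Matrix (Fin p) (Fin p) ℝ) : ℝ :=
  sSup {t : ℝ | ∃ v : Fin p → ℝ, ∑ i, v i ^ 2 ≤ 1 ∧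
    t = Real.sqrt (∑ i, (A.mulVec v i) ^ 2)}

lemma opNorm_set_bddAbove {p : ℕ} (A : Matrix (Fin p) (Fin p) ℝ) :
    BddAbove {t : ℝ | ∃ v : Fin p → ℝ, ∑ i, v i ^ 2 ≤ 1 ∧
      t = Real.sqrt (∑ i, (A.mulVec v i) ^ 2)} := by
  refine ⟨Real.sqrt (∑ i, ∑ j, A i j ^ 2), ?_⟩
  rintro t ⟨v, hv, rfl⟩
  apply Real.sqrt_le_sqrt
  calc ∑ i, (A.mulVec v i) ^ 2
      ≤ ∑ i, (∑ j, A i j ^ 2) * (∑ j, v j ^ 2) := by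
        refine Finset.sum_le_sum fun i _ => ?_
        simpa [Matrix.mulVec, dotProduct] using
          Finset.sum_mul_sq_le_sq_mul_sq Finset.univ (fun j => A i j) v
    _ ≤ ∑ i, (∑ j, A i j ^ 2) * 1 := by
        refine Finset.sum_le_sum fun i _ => ?_
        exact mul_le_mul_of_nonneg_left hv (by positivity)
    _ = _ := by simp

lemma le_opNorm {p : ℕ} (A : Matrix (Fin p) (Fin p) ℝ) (v : Fin p → ℝ)
    (hv : ∑ i, v i ^ 2 ≤ 1) :
    Real.sqrt (∑ i, (A.mulVec v i) ^ 2) ≤ opNorm A :=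
  le_csSup (opNorm_set_bddAbove A) ⟨v, hv, rfl⟩

lemma opNorm_lb {p : ℕ} (A : Matrix (Fin p) (Fin p) ℝ) (v : Fin p → ℝ)
    (hv : ∑ i, v i ^ 2 = 1) (c : ℝ)
    (h : c ≤ |∑ i, v i * A.mulVec v i|) : c ≤ opNorm A := by
  refine le_trans ?_ (le_opNorm A v hv.le)
  refine h.trans ?_
  rw [← Real.sqrt_sq_eq_abs]
  apply Real.sqrt_le_sqrt
  calc (∑ i, v i * A.mulVec v i) ^ 2
      ≤ (∑ i, v i ^ 2) * (∑ i, (A.mulVec v i) ^ 2) :=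
        Finset.sum_mul_sq_le_sq_mul_sq Finset.univ v (A.mulVec v)
    _ = ∑ i, (A.mulVec v i) ^ 2 := by rw [hv, one_mul]

lemma exists_unit_orth {p n m : ℕ} (c : ℝ) (hc : 0 < c)
    (w : Fin n → Fin p → ℝ) (u : Fin m → Fin p → ℝ)
    (hworth : ∀ l k, l ≠ k → ∑ i, w l i * w k i = 0)
    (hwnorm : ∀ l, c < ∑ i, w l i ^ 2)
    (hlt : m < n) :
    ∃ v : Fin p → ℝ, (∑ i, v i ^ 2 = 1) ∧ (∀ l, ∑ i, u l i * v i = 0) ∧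
      c ≤ ∑ l, (∑ i, w l i * v i) ^ 2 := by
  have hNpos : ∀ l, (0:ℝ) < ∑ i, w l i ^ 2 := fun l => hc.trans (hwnorm l)
  -- linear independence of w
  have hind : LinearIndependent ℝ w := by
    rw [linearIndependent_iff']
    intro s g hg k hk
    have h1 : ∑ i, (∑ l ∈ s, g l • w l) i * w k i = 0 := by rw [hg]; simp
    have h2 : ∀ i, (∑ l ∈ s, g l • w l) i * w k i = ∑ l ∈ s, g l * (w l i * w k i) :=
      fun i => by simp [Finset.sum_mul, mul_assoc]
    rw [Finset.sum_congr rfl (fun i _ => h2 i), Finset.sum_comm] at h1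
    simp_rw [← Finset.mul_sum] at h1
    rw [Finset.sum_eq_single k (fun b _ hb => by rw [hworth b k hb, mul_zero])
      (fun h => absurd hk h)] at h1
    have := (hNpos k).ne'
    rcases mul_eq_zero.1 h1 with h | h
    · exact h
    · exact absurd (by simpa [pow_two] using h) (by simpa [pow_two] using this)
  -- the span and the constraint map
  set W := Submodule.span ℝ (Set.range w) with hW
  have hdimW : Module.finrank ℝ W = n := by
    rw [finrank_span_eq_card hind, Fintype.card_fin]
  let f : (Fin p → ℝ) →ₗ[ℝ] (Fin m → ℝ) :=
    { toFun := fun v l => ∑ i, u l i * v i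
      map_add' := fun x y => by
        funext l; simp [mul_add, Finset.sum_add_distrib]
      map_smul' := fun t x => by
        funext l; simp [Finset.mul_sum]; ring_nf
        exact Finset.sum_congr rfl fun i _ => by ring }
  let g := f.comp W.subtype
  have hker : 0 < Module.finrank ℝ (LinearMap.ker g) := by
    have h1 := LinearMap.finrank_range_add_finrank_ker g
    have h2 : Module.finrank ℝ (LinearMap.range g) ≤ m := by
      simpa using (LinearMap.range g).finrank_le
    omega
  haveI := Module.nontrivial_of_finrank_pos hker
  obtain ⟨x, hx0⟩ := exists_ne (0 : LinearMap.ker g)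
  have hxW : (x : W).1 ∈ W := (x : W).2
  have hxker : ∀ l, ∑ i, u l i * (x : W).1 i = 0 := by
    intro l
    have := x.2
    rw [LinearMap.mem_ker] at this
    exact congrFun this l
  have hxne : (x : W).1 ≠ 0 := by
    intro h
    apply hx0
    ext i
    exact congrFun h i
  -- coefficients
  have hxW' : (x : W).1 ∈ Submodule.span ℝ (Set.range w) := hxW
  rw [Submodule.mem_span_range_iff_exists_fun] at hxW'
  obtain ⟨d, hd⟩ := hxW'
  set y : Fin p → ℝ := (x : W).1 with hy
  have hdot : ∀ k, ∑ i, w k i * y i = d k * ∑ i, w k i ^ 2 := by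
    intro k
    have : ∑ i, w k i * y i = ∑ i, ∑ l, d l * (w k i * w l i) := by
      refine Finset.sum_congr rfl fun i _ => ?_
      rw [← hd]
      simp [Finset.mul_sum]
      exact Finset.sum_congr rfl fun l _ => by ring
    rw [this, Finset.sum_comm]
    simp_rw [← Finset.mul_sum]
    rw [Finset.sum_eq_single k (fun b _ hb => by
        rw [show ∑ i, w k i * w b i = 0 from hworth k b (Ne.symm hb), mul_zero])
      (by simp)]
    congr 1
    exact Finset.sum_congr rfl fun i _ => by rw [pow_two]
  have hs : ∑ i, y i ^ 2 = ∑ l, d l ^ 2 * ∑ i, w l i ^ 2 := by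
    have h1 : ∑ i, y i ^ 2 = ∑ i, (∑ l, d l * w l i) * y i := by
      refine Finset.sum_congr rfl fun i _ => ?_
      rw [pow_two]
      congr 1
      rw [← hd]; simp
    rw [h1]
    simp_rw [Finset.sum_mul]
    rw [Finset.sum_comm]
    refine Finset.sum_congr rfl fun l _ => ?_
    simp_rw [mul_assoc, ← Finset.mul_sum]
    rw [hdot l, pow_two]
    ring
  set s : ℝ := ∑ i, y i ^ 2 with hsdef
  have hspos : 0 < s := by
    rcases (Finset.sum_nonneg fun i _ => sq_nonneg (y i)).lt_or_eq with h | h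
    · exact h
    · exfalso
      apply hxne
      funext i
      have := (Finset.sum_eq_zero_iff_of_nonneg fun i _ => sq_nonneg (y i)).1 h.symm i
        (Finset.mem_univ i)
      exact pow_eq_zero_iff (two_ne_zero) |>.1 this
  set t : ℝ := (Real.sqrt s)⁻¹ with ht
  have hts : t ^ 2 = s⁻¹ := by
    rw [ht, ← Real.sqrt_inv, Real.sq_sqrt (inv_nonneg.2 hspos.le)]
  refine ⟨t • y, ?_, ?_, ?_⟩
  · simp only [Pi.smul_apply, smul_eq_mul, mul_pow, ← Finset.mul_sum]
    rw [hts, ← hsdef, inv_mul_cancel₀ hspos.ne']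
  · intro l
    simp only [Pi.smul_apply, smul_eq_mul]
    have : ∑ i, u l i * (t * y i) = t * ∑ i, u l i * y i := by
      rw [Finset.mul_sum]
      exact Finset.sum_congr rfl fun i _ => by ring
    rw [this, hxker l, mul_zero]
  · have hterm : ∀ l, (∑ i, w l i * (t • y) i) ^ 2 = s⁻¹ * (d l ^ 2 * (∑ i, w l i ^ 2) ^ 2) := by
      intro l
      have : ∑ i, w l i * (t • y) i = t * ∑ i, w l i * y i := by
        rw [Finset.mul_sum]
        exact Finset.sum_congr rfl fun i _ => by simp only [Pi.smul_apply, smul_eq_mul]; ring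
      rw [this, hdot l, mul_pow, hts, mul_pow]
    simp_rw [hterm]
    rw [← Finset.mul_sum]
    have hge : ∑ l, d l ^ 2 * (∑ i, w l i ^ 2) ^ 2 ≥ c * s := by
      rw [hs, Finset.mul_sum]
      refine Finset.sum_le_sum fun l _ => ?_
      have h1 : c * (d l ^ 2 * ∑ i, w l i ^ 2) = (d l ^ 2 * ∑ i, w l i ^ 2) * c := by ring
      have h2 : d l ^ 2 * (∑ i, w l i ^ 2) ^ 2 = (d l ^ 2 * ∑ i, w l i ^ 2) * ∑ i, w l i ^ 2 := by
        ring
      rw [h1, h2]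
      exact mul_le_mul_of_nonneg_left (hwnorm l).le
        (mul_nonneg (sq_nonneg _) (hNpos l).le)
    calc c = s⁻¹ * (c * s) := by field_simp
    _ ≤ s⁻¹ * ∑ l, d l ^ 2 * (∑ i, w l i ^ 2) ^ 2 :=
        mul_le_mul_of_nonneg_left hge (inv_nonneg.2 hspos.le)

lemma spiked_mulVec {p n : ℕ} (w : Fin n → Fin p → ℝ) (v : Fin p → ℝ) (i : Fin p) :
    ((∑ l, Matrix.vecMulVec (w l) (w l)) + 1).mulVec v i
      = (∑ l, w l i * (∑ j, w l j * v j)) + v i := by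
  rw [Matrix.add_mulVec, Matrix.one_mulVec]
  simp only [Pi.add_apply]
  congr 1
  simp only [Matrix.mulVec, dotProduct, Matrix.sum_apply, vecMulVec_apply,
    Finset.sum_mul]
  rw [Finset.sum_comm]
  exact Finset.sum_congr rfl fun l _ => by
    rw [Finset.mul_sum]
    exact Finset.sum_congr rfl fun j _ => by ring

lemma quad_sum {p n : ℕ} (w : Fin n → Fin p → ℝ) (v : Fin p → ℝ) :
    ∑ i, v i * (∑ l, w l i * (∑ j, w l j * v j)) = ∑ l, (∑ j, w l j * v j) ^ 2 := by
  simp_rw [Finset.mul_sum]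
  rw [Finset.sum_comm]
  refine Finset.sum_congr rfl fun l _ => ?_
  rw [pow_two, Finset.sum_mul_sum]
  exact Finset.sum_congr rfl fun x _ => Finset.sum_congr rfl fun i _ => by ring

/-- If two spiked covariance matrices with eigengaps (spike norms bounded below by
`K⁻¹` resp. `(2K)⁻¹`) are within `(2K)⁻¹` in operator norm, then they have the same
number of spikes. -/
theorem rank_recovery_from_spectral_closeness
    (p r ξ : ℕ) (K : ℝ) (hK : 1 ≤ K)
    (θ : Fin r → Fin p → ℝ) (η : Fin ξ → Fin p → ℝ)
    (hθorth : ∀ l k : Fin r, l ≠ k → ∑ i, θ l i * θ k i = 0)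
    (hηorth : ∀ l k : Fin ξ, l ≠ k → ∑ i, η l i * η k i = 0)
    (hθnorm : ∀ l : Fin r, K⁻¹ < ∑ i, θ l i ^ 2 ∧ ∑ i, θ l i ^ 2 < K)
    (hηnorm : ∀ l : Fin ξ, (2 * K)⁻¹ < ∑ i, η l i ^ 2 ∧ ∑ i, η l i ^ 2 < 2 * K)
    (Sigma0 Γ : Matrix (Fin p) (Fin p) ℝ)
    (hSigma : Sigma0 = (∑ l, Matrix.vecMulVec (θ l) (θ l)) + 1)
    (hGamma : Γ = (∑ l, Matrix.vecMulVec (η l) (η l)) + 1)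
    (hclose : opNorm (Γ - Sigma0) < (2 * K)⁻¹) :
    ξ = r := by
  by_contra hne
  have hK0 : (0:ℝ) < K := lt_of_lt_of_le one_pos hK
  have h2K : (0:ℝ) < (2 * K)⁻¹ := by positivity
  have hAv : ∀ v : Fin p → ℝ, ∀ i, (Γ - Sigma0).mulVec v i
      = (∑ l, η l i * (∑ j, η l j * v j)) - (∑ l, θ l i * (∑ j, θ l j * v j)) := by
    intro v i
    rw [Matrix.sub_mulVec]
    simp only [Pi.sub_apply]
    rw [hGamma, hSigma, spiked_mulVec, spiked_mulVec]
    ring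
  rcases lt_or_gt_of_ne hne with hlt | hgt
  · -- ξ < r : find unit v in span θ orthogonal to all η
    have hθlb : ∀ l : Fin r, (2 * K)⁻¹ < ∑ i, θ l i ^ 2 := by
      intro l
      refine lt_of_le_of_lt ?_ (hθnorm l).1
      rw [inv_le_inv₀ (by positivity) hK0]
      linarith
    obtain ⟨v, hv1, hv2, hv3⟩ := exists_unit_orth ((2 * K)⁻¹) h2K θ η hθorth hθlb hlt
    have hAv' : ∀ i, (Γ - Sigma0).mulVec v i = -(∑ l, θ l i * (∑ j, θ l j * v j)) := by
      intro i
      rw [hAv v i]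
      have : ∀ l : Fin ξ, η l i * (∑ j, η l j * v j) = 0 := fun l => by rw [hv2 l, mul_zero]
      rw [Finset.sum_congr rfl fun l _ => this l]
      simp
    have hquad : ∑ i, v i * (Γ - Sigma0).mulVec v i = -(∑ l, (∑ j, θ l j * v j) ^ 2) := by
      rw [show ∑ i, v i * (Γ - Sigma0).mulVec v i
          = ∑ i, v i * -(∑ l, θ l i * (∑ j, θ l j * v j)) from
        Finset.sum_congr rfl fun i _ => by rw [hAv' i]]
      simp_rw [mul_neg, Finset.sum_neg_distrib]
      rw [quad_sum]
    have : (2 * K)⁻¹ ≤ opNorm (Γ - Sigma0) := by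
      refine opNorm_lb _ v hv1 _ ?_
      rw [hquad, abs_neg, abs_of_nonneg (Finset.sum_nonneg fun l _ => sq_nonneg _)]
      exact hv3
    linarith
  · -- r < ξ : find unit v in span η orthogonal to all θ
    obtain ⟨v, hv1, hv2, hv3⟩ := exists_unit_orth ((2 * K)⁻¹) h2K η θ hηorth
      (fun l => (hηnorm l).1) hgt
    have hAv' : ∀ i, (Γ - Sigma0).mulVec v i = ∑ l, η l i * (∑ j, η l j * v j) := by
      intro i
      rw [hAv v i]
      have : ∀ l : Fin r, θ l i * (∑ j, θ l j * v j) = 0 := fun l => by rw [hv2 l, mul_zero]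
      rw [Finset.sum_congr rfl fun l _ => this l]
      simp
    have hquad : ∑ i, v i * (Γ - Sigma0).mulVec v i = ∑ l, (∑ j, η l j * v j) ^ 2 := by
      rw [show ∑ i, v i * (Γ - Sigma0).mulVec v i
          = ∑ i, v i * (∑ l, η l i * (∑ j, η l j * v j)) from
        Finset.sum_congr rfl fun i _ => by rw [hAv' i]]
      rw [quad_sum]
    have : (2 * K)⁻¹ ≤ opNorm (Γ - Sigma0) := by
      refine opNorm_lb _ v hv1 _ ?_
      rw [hquad, abs_of_nonneg (Finset.sum_nonneg fun l _ => sq_nonneg _)]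
      exact hv3
    linarith

end
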